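/- Discrete pointwise bounds for the nutrient variable (n-component of Theorem 'Pointwise bounds'): suppose n^m_K ∈ [0,1] for every cell K and n : 𝒦 → ℝ solves the discrete n-equation of the upwind DG scheme for some data μ, ν, u : 𝒦 → ℝ. Then n_K ∈ [0,1] for every cell K. -/

import Mathlib

/-- The degenerate mobility `M(v) = K ⬝ (v)₊^p ⬝ (1-v)₊^q`. -/
noncomputable def M (Km : ℝ) (p q : ℕ) (v : ℝ) : ℝ :=
  Km * max v 0 ^ p * max (1 - v) 0 ^ q

/-- The point `v* = p/(p+q)` where the maximum of `M` is attained. -/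
noncomputable def vstar (p q : ℕ) : ℝ := (p:ℝ) / ((p:ℝ) + (q:ℝ))

/-- Increasing part of the mobility. -/
noncomputable def Mup (Km : ℝ) (p q : ℕ) (v : ℝ) : ℝ :=
  if v ≤ vstar p q then M Km p q v else M Km p q (vstar p q)

/-- Decreasing part of the mobility. -/
noncomputable def Mdown (Km : ℝ) (p q : ℕ) (v : ℝ) : ℝ :=
  if v ≤ vstar p q then 0 else M Km p q v - M Km p q (vstar p q)

/-- The upwind edge flux `Φ_{K,L}(μ, v)` between adjacent cells `K` and `L`. -/
noncomputable def Phi (Km : ℝ) (p q : ℕ) {𝒦 : Type*} (μ v : 𝒦 → ℝ) (a b : 𝒦) : ℝ :=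
  max (μ a - μ b) 0 * max (Mup Km p q (v a) + Mdown Km p q (v b)) 0
    - max (-(μ a - μ b)) 0 * max (Mup Km p q (v b) + Mdown Km p q (v a)) 0

/-- The proliferation function `P(u, n) = K_P ⬝ (u)₊^r ⬝ (1-u)₊^s ⬝ (n)₊`. -/
noncomputable def prolif (KP : ℝ) (r s : ℕ) (u n : ℝ) : ℝ :=
  KP * max u 0 ^ r * max (1 - u) 0 ^ s * max n 0

/-!
If `n_K < 0`, then `M↑(n_K) = 0` and `M↓ ≤ 0`, so every flux out of `K` carries zero mobility
and `Φ_{K,L} ≤ 0`; the proliferation term vanishes as well, so the equation forces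
`n_K ≥ n^m_K ≥ 0`. If `n_K > 1`, then `M↓(n_K) = -M(v*)` cancels `M↑(n_L) ≤ M(v*)`, so nothing
flows into `K` and `Φ_{K,L} ≥ 0`; the reaction term is a sink, hence `n_K ≤ n^m_K ≤ 1`.
The only analytic input is `M ≤ M(v*)`, which is weighted AM–GM with weights `p, q`.
-/

theorem pow_mul_pow_le_one_of_mul_add_mul_eq (p q : ℕ) {a b : ℝ} (ha : 0 ≤ a) (hb : 0 ≤ b)
    (h : p * a + q * b = p + q) : a ^ p * b ^ q ≤ 1 := by
  rcases Nat.eq_zero_or_pos (p + q) with hN | hN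
  · simp [Nat.add_eq_zero_iff.1 hN]
  have hN' : (0 : ℝ) < p + q := by exact_mod_cast hN
  have amgm : a ^ (p / (p + q : ℝ)) * b ^ (q / (p + q : ℝ)) ≤ 1 :=
    calc _ ≤ p / (p + q : ℝ) * a + q / (p + q : ℝ) * b :=
          Real.geom_mean_le_arith_mean2_weighted (by positivity) (by positivity) ha hb
            (by field_simp)
      _ = 1 := by field_simp; linarith
  calc a ^ p * b ^ q = (a ^ (p / (p + q : ℝ)) * b ^ (q / (p + q : ℝ))) ^ (p + q) := by
        rw [mul_pow, ← Real.rpow_natCast _ (p + q), ← Real.rpow_natCast _ (p + q),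
          ← Real.rpow_mul ha, ← Real.rpow_mul hb, Nat.cast_add,
          div_mul_cancel₀ _ hN'.ne', div_mul_cancel₀ _ hN'.ne', Real.rpow_natCast,
          Real.rpow_natCast]
    _ ≤ 1 := pow_le_one₀ (by positivity) amgm

theorem vstar_nonneg (p q : ℕ) : 0 ≤ vstar p q := by
  unfold vstar; positivity

theorem vstar_pos {p : ℕ} (hp : 0 < p) (q : ℕ) : 0 < vstar p q := by
  unfold vstar; positivity

theorem vstar_lt_one (p : ℕ) {q : ℕ} (hq : 0 < q) : vstar p q < 1 := by
  have hq' : (0 : ℝ) < q := by exact_mod_cast hq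
  unfold vstar
  rw [div_lt_one (by positivity)]
  linarith

theorem one_sub_vstar {p : ℕ} (hp : 0 < p) (q : ℕ) : 1 - vstar p q = q / (p + q) := by
  have hpq : (0 : ℝ) < p + q := by positivity
  unfold vstar
  field_simp
  ring

theorem pow_mul_one_sub_pow_le_vstar {p q : ℕ} (hp : 0 < p) (hq : 0 < q) {x : ℝ}
    (hx₀ : 0 ≤ x) (hx₁ : x ≤ 1) :
    x ^ p * (1 - x) ^ q ≤ vstar p q ^ p * (1 - vstar p q) ^ q := by
  have ht₀ := vstar_pos hp q
  have ht₁ : 0 < 1 - vstar p q := sub_pos.2 (vstar_lt_one p hq)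
  have hmean : p * (x / vstar p q) + q * ((1 - x) / (1 - vstar p q)) = p + q := by
    rw [one_sub_vstar hp]
    unfold vstar
    field_simp
    ring
  have hab := pow_mul_pow_le_one_of_mul_add_mul_eq p q (div_nonneg hx₀ ht₀.le)
    (div_nonneg (sub_nonneg.2 hx₁) ht₁.le) hmean
  calc x ^ p * (1 - x) ^ q
      = vstar p q ^ p * (1 - vstar p q) ^ q *
          ((x / vstar p q) ^ p * ((1 - x) / (1 - vstar p q)) ^ q) := by
        rw [div_pow, div_pow]; field_simp
    _ ≤ vstar p q ^ p * (1 - vstar p q) ^ q := mul_le_of_le_one_right (by positivity) hab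

section Mobility

variable {Km : ℝ} {p q : ℕ}

theorem M_nonneg (hKm : 0 ≤ Km) (v : ℝ) : 0 ≤ M Km p q v := by
  unfold M; positivity

theorem M_eq_zero_of_nonpos (hp : 0 < p) {v : ℝ} (hv : v ≤ 0) : M Km p q v = 0 := by
  simp [M, max_eq_right hv, zero_pow hp.ne']

theorem M_eq_zero_of_one_le (hq : 0 < q) {v : ℝ} (hv : 1 ≤ v) : M Km p q v = 0 := by
  simp [M, max_eq_right (sub_nonpos.2 hv), zero_pow hq.ne']

theorem M_le_M_vstar (hKm : 0 ≤ Km) (hp : 0 < p) (hq : 0 < q) (v : ℝ) :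
    M Km p q v ≤ M Km p q (vstar p q) := by
  rcases le_or_gt v 0 with hv₀ | hv₀
  · rw [M_eq_zero_of_nonpos hp hv₀]; exact M_nonneg hKm _
  rcases le_or_gt 1 v with hv₁ | hv₁
  · rw [M_eq_zero_of_one_le hq hv₁]; exact M_nonneg hKm _
  have ht₀ := vstar_pos hp q
  have ht₁ := vstar_lt_one p hq
  simp only [M, max_eq_left hv₀.le, max_eq_left (sub_pos.2 hv₁).le, max_eq_left ht₀.le,
    max_eq_left (sub_pos.2 ht₁).le, mul_assoc]
  exact mul_le_mul_of_nonneg_left (pow_mul_one_sub_pow_le_vstar hp hq hv₀.le hv₁.le) hKm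

theorem Mup_eq_zero_of_nonpos (hp : 0 < p) {v : ℝ} (hv : v ≤ 0) : Mup Km p q v = 0 := by
  rw [Mup, if_pos (hv.trans (vstar_nonneg p q)), M_eq_zero_of_nonpos hp hv]

theorem Mup_le_M_vstar (hKm : 0 ≤ Km) (hp : 0 < p) (hq : 0 < q) (v : ℝ) :
    Mup Km p q v ≤ M Km p q (vstar p q) := by
  unfold Mup
  split_ifs
  exacts [M_le_M_vstar hKm hp hq v, le_rfl]

theorem Mdown_nonpos (hKm : 0 ≤ Km) (hp : 0 < p) (hq : 0 < q) (v : ℝ) : Mdown Km p q v ≤ 0 := by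
  unfold Mdown
  split_ifs
  exacts [le_rfl, sub_nonpos.2 (M_le_M_vstar hKm hp hq v)]

theorem Mdown_eq_neg_of_one_le (hq : 0 < q) {v : ℝ} (hv : 1 ≤ v) :
    Mdown Km p q v = -M Km p q (vstar p q) := by
  rw [Mdown, if_neg (not_le.2 ((vstar_lt_one p hq).trans_le hv)), M_eq_zero_of_one_le hq hv,
    zero_sub]

end Mobility

section Flux

variable {Km : ℝ} {p q : ℕ} {𝒦 : Type*} (μ : 𝒦 → ℝ) {v : 𝒦 → ℝ} {a : 𝒦} (b : 𝒦)

theorem Phi_nonpos_of_nonpos (hKm : 0 ≤ Km) (hp : 0 < p) (hq : 0 < q) (ha : v a ≤ 0) :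
    Phi Km p q μ v a b ≤ 0 := by
  rw [Phi, Mup_eq_zero_of_nonpos hp ha, zero_add, max_eq_right (Mdown_nonpos hKm hp hq _),
    mul_zero, zero_sub, neg_nonpos]
  positivity

theorem Phi_nonneg_of_one_le (hKm : 0 ≤ Km) (hp : 0 < p) (hq : 0 < q) (ha : 1 ≤ v a) :
    0 ≤ Phi Km p q μ v a b := by
  have houtflow : Mup Km p q (v b) + Mdown Km p q (v a) ≤ 0 := by
    rw [Mdown_eq_neg_of_one_le hq ha]
    linarith [Mup_le_M_vstar hKm hp hq (v b)]
  rw [Phi, max_eq_right houtflow, mul_zero, sub_zero]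
  positivity

end Flux

theorem prolif_eq_zero_of_nonpos (KP : ℝ) (r s : ℕ) (u : ℝ) {n : ℝ} (hn : n ≤ 0) :
    prolif KP r s u n = 0 := by
  rw [prolif, max_eq_right hn, mul_zero]

theorem prolif_nonneg {KP : ℝ} (hKP : 0 ≤ KP) (r s : ℕ) (u n : ℝ) : 0 ≤ prolif KP r s u n := by
  unfold prolif; positivity

theorem le_of_mul_sub_div_nonneg {m Δt x y : ℝ} (hm : 0 < m) (hΔt : 0 < Δt)
    (h : 0 ≤ m * (x - y) / Δt) : y ≤ x := by
  rwa [le_div_iff₀ hΔt, zero_mul, mul_nonneg_iff_of_pos_left hm, sub_nonneg] at h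

theorem discrete_pointwise_bounds_n_general (Km : ℝ) (hKm : 0 < Km)
    (p q : ℕ) (hp : 1 ≤ p) (hq : 1 ≤ q)
    (KP : ℝ) (hKP : 0 < KP) (r s : ℕ)
    {𝒦 : Type*} [Fintype 𝒦]
    (m : 𝒦 → ℝ) (hm : ∀ K, 0 < m K)
    (adj : 𝒦 → 𝒦 → Prop) [DecidableRel adj]
    (w : 𝒦 → 𝒦 → ℝ)
    (hw_pos : ∀ K L, adj K L → 0 < w K L)
    (Δt : ℝ) (hΔt : 0 < Δt) (Cn : ℝ) (hCn : 0 < Cn)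
    (δ : ℝ) (hδ : 0 ≤ δ) (P₀ : ℝ) (hP₀ : 0 ≤ P₀)
    (nm : 𝒦 → ℝ) (hnm : ∀ K, nm K ∈ Set.Icc (0:ℝ) 1)
    (μ ν u n : 𝒦 → ℝ)
    (hn : ∀ K, m K * (n K - nm K) / Δt =
      - Cn * (∑ L, if adj K L then w K L * Phi Km p q ν n K L else 0)
      - δ * P₀ * m K * prolif KP r s (u K) (n K) * max (ν K - μ K) 0) :
    ∀ K, n K ∈ Set.Icc (0:ℝ) 1 := by
  intro K
  constructor
  · by_contra! hneg
    have hflux : (∑ L, if adj K L then w K L * Phi Km p q ν n K L else 0) ≤ 0 :=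
      Finset.sum_nonpos fun L _ => by
        split_ifs with hKL
        exacts [mul_nonpos_of_nonneg_of_nonpos (hw_pos K L hKL).le
          (Phi_nonpos_of_nonpos ν L hKm.le hp hq hneg.le), le_rfl]
    have hgrowth : nm K ≤ n K := le_of_mul_sub_div_nonneg (hm K) hΔt <| by
      rw [hn K, prolif_eq_zero_of_nonpos KP r s (u K) hneg.le]
      linarith [mul_nonneg hCn.le (neg_nonneg.2 hflux)]
    linarith [(hnm K).1]
  · by_contra! hbig
    have hflux : 0 ≤ (∑ L, if adj K L then w K L * Phi Km p q ν n K L else 0) :=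
      Finset.sum_nonneg fun L _ => by
        split_ifs with hKL
        exacts [mul_nonneg (hw_pos K L hKL).le
          (Phi_nonneg_of_one_le ν L hKm.le hp hq hbig.le), le_rfl]
    have hreaction : 0 ≤ δ * P₀ * m K * prolif KP r s (u K) (n K) * max (ν K - μ K) 0 := by
      have := prolif_nonneg hKP.le r s (u K) (n K)
      have := (hm K).le
      positivity
    have hdecay : n K ≤ nm K := le_of_mul_sub_div_nonneg (hm K) hΔt <| by
      rw [← neg_sub, mul_neg, neg_div, hn K]
      linarith [mul_nonneg hCn.le hflux]
    linarith [(hnm K).2]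

/-- Discrete pointwise bounds for the nutrient variable: any solution of the
discrete `n`-equation of the upwind DG scheme stays in `[0,1]`. -/
theorem discrete_pointwise_bounds_n (Km : ℝ) (hKm : 0 < Km)
    (p q : ℕ) (hp : 1 ≤ p) (hq : 1 ≤ q)
    (KP : ℝ) (hKP : 0 < KP) (r s : ℕ) (hr : 1 ≤ r) (hs : 1 ≤ s)
    {𝒦 : Type*} [Fintype 𝒦]
    (m : 𝒦 → ℝ) (hm : ∀ K, 0 < m K)
    (adj : 𝒦 → 𝒦 → Prop) [DecidableRel adj]
    (hadj_symm : ∀ K L, adj K L → adj L K) (hadj_irrefl : ∀ K, ¬ adj K K)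
    (w : 𝒦 → 𝒦 → ℝ) (hw_symm : ∀ K L, w K L = w L K)
    (hw_pos : ∀ K L, adj K L → 0 < w K L)
    (Δt : ℝ) (hΔt : 0 < Δt) (Cn : ℝ) (hCn : 0 < Cn)
    (δ : ℝ) (hδ : 0 ≤ δ) (P₀ : ℝ) (hP₀ : 0 ≤ P₀)
    (nm : 𝒦 → ℝ) (hnm : ∀ K, nm K ∈ Set.Icc (0:ℝ) 1)
    (μ ν u n : 𝒦 → ℝ)
    (hn : ∀ K, m K * (n K - nm K) / Δt =
      - Cn * (∑ L, if adj K L then w K L * Phi Km p q ν n K L else 0)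
      - δ * P₀ * m K * prolif KP r s (u K) (n K) * max (ν K - μ K) 0) :
    ∀ K, n K ∈ Set.Icc (0:ℝ) 1 :=
  discrete_pointwise_bounds_n_general Km hKm p q hp hq KP hKP r s m hm adj w hw_pos Δt hΔt Cn hCn δ
    hδ P₀ hP₀ nm hnm μ ν u n hn
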